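/- Let K be a convex body in R^d in gamma-canonical form for gamma in (0,1], let Delta_0 = (1/2)·(gamma^2/(4d))^d, let lambda_0 = 1/(20·sqrt(d)), and let 0 < Delta <= Delta_0. Let X be a set of points of K with delta(x) = Delta for all x ∈ X that is maximal with respect to having pairwise disjoint Macbeath regions M^{lambda_0}(x), in the sense that for every point x' ∈ K with delta(x') = Delta there exists x ∈ X such that M^{lambda_0}(x) ∩ M^{lambda_0}(x') is nonempty. Then every point x' ∈ K with delta(x') = Delta is contained in M^{4·lambda_0}(x) for some x ∈ X; that is, the regions M^{4·lambda_0}(x), x ∈ X, cover the boundary of the erosion K(Delta). -/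

import Mathlib

/-!
Write a common point of `M^λ(x)` and `M^λ(x')` as `x + λu = x' + λu'`
with `x ± u, x' ± u' ∈ K`. Then `v = (u - u')/4` satisfies `x + 4λv = x'`, and as long as
`λ ≤ 1/2` each of `x + v` and `x - v` is a convex combination of `x + u`, `x - u` and
one of `x' ∓ u'`; so `x' ∈ M^{4λ}(x)`.
-/

open Set Metric
open scoped Pointwise

/-- The Macbeath region `M^λ(x) = x + λ((K − x) ∩ (x − K))`. -/
def macbeath {d : ℕ} (K : Set (EuclideanSpace ℝ (Fin d)))
    (x : EuclideanSpace ℝ (Fin d)) (lam : ℝ) : Set (EuclideanSpace ℝ (Fin d)) :=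
  (fun v => x + lam • v) '' ((K - {x}) ∩ ({x} - K))

theorem Convex.add_quarter_smul_sub_mem {E : Type*} [AddCommGroup E] [Module ℝ E] {K : Set E}
    (hK : Convex ℝ K) {t : ℝ} (ht : -(1 / 2) ≤ t) {x u u' : E}
    (hxu : x + u ∈ K) (hxu' : x - u ∈ K) (hp : x + t • u - (1 + t) • u' ∈ K) :
    x + (1 / 4 : ℝ) • (u - u') ∈ K := by
  -- the midpoint of `x + u` and a point `q` of the segment from `x - u` to the third point
  have h1t : 0 < 1 + t := by linarith
  have hq : ((1 + 2 * t) / (2 * (1 + t))) • (x - u) +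
      (1 / (2 * (1 + t))) • (x + t • u - (1 + t) • u') ∈ K :=
    hK hxu' hp (div_nonneg (by linarith) (by linarith)) (by positivity) (by field_simp; ring)
  have half : (0 : ℝ) ≤ 1 / 2 := by norm_num
  convert hK hxu hq half half (by norm_num) using 1
  match_scalars <;> field_simp <;> ring

theorem mem_macbeath_iff {d : ℕ} {K : Set (EuclideanSpace ℝ (Fin d))}
    {x z : EuclideanSpace ℝ (Fin d)} {lam : ℝ} :
    z ∈ macbeath K x lam ↔ ∃ v, x + v ∈ K ∧ x - v ∈ K ∧ x + lam • v = z := by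
  have hsub : ∀ v, v ∈ K - {x} ↔ x + v ∈ K := fun v => by
    simp [sub_singleton, sub_eq_iff_eq_add, add_comm]
  have hsub' : ∀ v, v ∈ {x} - K ↔ x - v ∈ K := fun v => by
    rw [singleton_sub, mem_image]
    exact ⟨fun ⟨k, hk, hkv⟩ => by rwa [← hkv, sub_sub_cancel],
      fun h => ⟨x - v, h, sub_sub_cancel x v⟩⟩
  simp only [macbeath, mem_image, mem_inter_iff, hsub, hsub', and_assoc]

theorem mem_macbeath_four_mul_of_inter_nonempty {d : ℕ} {K : Set (EuclideanSpace ℝ (Fin d))}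
    (hK : Convex ℝ K) {lam : ℝ} (hlam₀ : 0 ≤ lam) (hlam : lam ≤ 1 / 2)
    {x x' : EuclideanSpace ℝ (Fin d)} (h : (macbeath K x lam ∩ macbeath K x' lam).Nonempty) :
    x' ∈ macbeath K x (4 * lam) := by
  obtain ⟨y, hy, hy'⟩ := h
  obtain ⟨u, hxu, hxu', rfl⟩ := mem_macbeath_iff.1 hy
  obtain ⟨u', hx'u, hx'u', hu⟩ := mem_macbeath_iff.1 hy'
  have hx' : x' = x + lam • u - lam • u' := by rw [← hu]; abel
  refine mem_macbeath_iff.2 ⟨(1 / 4 : ℝ) • (u - u'), ?_, ?_, ?_⟩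
  · refine hK.add_quarter_smul_sub_mem (t := lam) (by linarith) hxu hxu' ?_
    convert hx'u' using 1
    rw [hx']; module
  · have hneg := hK.add_quarter_smul_sub_mem (t := -lam) (u := -u) (u' := -u') (by linarith)
      (by simpa [← sub_eq_add_neg] using hxu') (by simpa using hxu)
      (by convert hx'u using 1; rw [hx']; module)
    convert hneg using 1; module
  · rw [hx']; module

theorem one_div_twenty_mul_sqrt_natCast_le_half (d : ℕ) : 1 / (20 * Real.sqrt d) ≤ 1 / 2 := by
  rcases Nat.eq_zero_or_pos d with rfl | hd
  · simp
  · have : 1 ≤ Real.sqrt d := Real.one_le_sqrt.2 (by exact_mod_cast hd)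
    gcongr
    linarith

theorem macbeath_regions_cover_general (d : ℕ)
    (K : Set (EuclideanSpace ℝ (Fin d)))
    (hK_conv : Convex ℝ K)
    (Delta : ℝ)
    (X : Set (EuclideanSpace ℝ (Fin d)))
    (hmax : ∀ x' : EuclideanSpace ℝ (Fin d), x' ∈ K →
      infDist x' (frontier K) = Delta →
      ∃ x ∈ X, (macbeath K x (1 / (20 * Real.sqrt d)) ∩
        macbeath K x' (1 / (20 * Real.sqrt d))).Nonempty) :
    ∀ x' : EuclideanSpace ℝ (Fin d), x' ∈ K → infDist x' (frontier K) = Delta →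
      ∃ x ∈ X, x' ∈ macbeath K x (4 * (1 / (20 * Real.sqrt d))) := by
  intro x' hx' hdist
  obtain ⟨x, hxX, hmeet⟩ := hmax x' hx' hdist
  exact ⟨x, hxX, mem_macbeath_four_mul_of_inter_nonempty hK_conv (by positivity)
    (one_div_twenty_mul_sqrt_natCast_le_half d) hmeet⟩

/-- Lemma `macbeath-cover`: let `K` be a convex body in `γ`-canonical
form, `λ₀ = 1/(20√d)`, `0 < Δ ≤ Δ₀`, and let `X` be a set of points of `K` at distance
`Δ` from `∂K` that is maximal for pairwise-disjointness of the Macbeath regions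
`M^{λ₀}(x)`. Then the regions `M^{4λ₀}(x)`, `x ∈ X`, cover the boundary of the erosion
`K(Δ)`. -/
theorem macbeath_regions_cover (d : ℕ)
    (gamma : ℝ) (hγ0 : 0 < gamma) (hγ1 : gamma ≤ 1)
    (K : Set (EuclideanSpace ℝ (Fin d)))
    (hK_compact : IsCompact K) (hK_conv : Convex ℝ K)
    (hK_int : (interior K).Nonempty)
    (hK_ball : closedBall 0 (gamma / 2) ⊆ K) (hK_ball' : K ⊆ closedBall 0 (1 / 2))
    (Delta : ℝ) (hΔ0 : 0 < Delta)
    (hΔ : Delta ≤ (1 / 2) * (gamma ^ 2 / (4 * d)) ^ d)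
    (X : Set (EuclideanSpace ℝ (Fin d)))
    (hX : ∀ x ∈ X, x ∈ K ∧ infDist x (frontier K) = Delta)
    (hmax : ∀ x' : EuclideanSpace ℝ (Fin d), x' ∈ K →
      infDist x' (frontier K) = Delta →
      ∃ x ∈ X, (macbeath K x (1 / (20 * Real.sqrt d)) ∩
        macbeath K x' (1 / (20 * Real.sqrt d))).Nonempty) :
    ∀ x' : EuclideanSpace ℝ (Fin d), x' ∈ K → infDist x' (frontier K) = Delta →
      ∃ x ∈ X, x' ∈ macbeath K x (4 * (1 / (20 * Real.sqrt d))) :=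
  macbeath_regions_cover_general d K hK_conv Delta X hmax
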